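/- Let T ⊂ ℝ^d be bounded with diam(T) = Δ, and for δ ∈ [0, Δ] define the Dudley integrals 𝒥_δ(T) = ∫_δ^Δ √(h_T(ε)) dε and 𝒥_δ^loc(T) = ∫_δ^Δ √(h_T^loc(ε)) dε. Then 𝒥_δ^loc(T) ≤ 𝒥_δ(T) ≤ 4·𝒥_{δ/4}^loc(T). -/

import Mathlib

open MeasureTheory Metric Set
open scoped ENNReal NNReal

noncomputable section

/-- `packNum A B` is the `B`-packing number of `A`: the largest cardinality of a finite
subset `A₀ ⊆ A` such that `x − y ∉ B` for all distinct `x, y ∈ A₀`. -/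
def packNum {E : Type*} [Sub E] (A B : Set E) : ℕ :=
  sSup {n : ℕ | ∃ s : Finset E, ↑s ⊆ A ∧
    (∀ x ∈ s, ∀ y ∈ s, x ≠ y → x - y ∉ B) ∧ s.card = n}

/-- Global packing entropy `h_T(ε) = log M(T, εB₂)`. -/
def entGlob {d : ℕ} (T : Set (EuclideanSpace ℝ (Fin d))) (ε : ℝ) : ℝ :=
  Real.log (packNum T (closedBall 0 ε))

/-- Local packing entropy
`h_T^loc(ε) = sup_{δ ≥ ε} sup_{x ∈ T} log M(T ∩ (x + 2δB₂), δB₂)`. -/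
def entLoc {d : ℕ} (T : Set (EuclideanSpace ℝ (Fin d))) (ε : ℝ) : ℝ :=
  ⨆ δ : {δ : ℝ // ε ≤ δ}, ⨆ x : T,
    Real.log (packNum (T ∩ closedBall (x : EuclideanSpace ℝ (Fin d)) (2 * δ.1))
      (closedBall 0 δ.1))

/-!
A maximal `2ε`-packing of `T` is a `2ε`-net, and the points of a maximal `ε`-packing that are
assigned to one net point form an `ε`-packing of a ball of radius `2ε` around it. Hence
`h_T(ε) ≤ h_T(2ε) + h_T^loc(ε)`. Taking square roots and integrating, the substitution `ε ↦ 2ε`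
and the vanishing of `h_T` beyond `diam T` give `𝒥_δ(T) ≤ 𝒥_δ(T) / 2 + 𝒥_δ^loc(T)`. A volume
comparison shows `h_T(ε) = O(1/ε)`, so all the integrals are finite, also for `δ = 0`.
-/

open Bornology Module

lemma Real.log_natCast_le_log_natCast {m n : ℕ} (h : m ≤ n) : Real.log m ≤ Real.log n := by
  rcases m.eq_zero_or_pos with rfl | hm
  · simpa using Real.log_natCast_nonneg n
  · exact Real.log_le_log (by exact_mod_cast hm) (by exact_mod_cast h)

lemma Real.sqrt_add_le_add_sqrt {a b : ℝ} (ha : 0 ≤ a) (hb : 0 ≤ b) : √(a + b) ≤ √a + √b :=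
  Real.sqrt_le_iff.2 ⟨by positivity, by
    nlinarith [Real.sq_sqrt ha, Real.sq_sqrt hb, Real.sqrt_nonneg a, Real.sqrt_nonneg b]⟩

section Packing

variable {E : Type*} [NormedAddCommGroup E]

def sepCards (A : Set E) (ε : ℝ) : Set ℕ :=
  {n | ∃ s : Finset E, ↑s ⊆ A ∧ (s : Set E).Pairwise (ε < dist · ·) ∧ s.card = n}

lemma packNum_closedBall_eq_sSup (A : Set E) (ε : ℝ) :
    packNum A (closedBall 0 ε) = sSup (sepCards A ε) := by
  simp [packNum, sepCards, Set.Pairwise, ← dist_eq_norm]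

lemma packNum_le_one_of_diam_le {A : Set E} (hA : IsBounded A) {ε : ℝ} (h : diam A ≤ ε) :
    packNum A (closedBall 0 ε) ≤ 1 := by
  rw [packNum_closedBall_eq_sSup]
  refine csSup_le ⟨0, ∅, by simp⟩ ?_
  rintro _ ⟨s, hsA, hs, rfl⟩
  refine Finset.card_le_one.2 fun x hx y hy => by_contra fun hxy => ?_
  exact (hs hx hy hxy).not_ge ((dist_le_diam_of_mem hA (hsA hx) (hsA hy)).trans h)

variable [NormedSpace ℝ E] [FiniteDimensional ℝ E]

theorem card_le_of_pairwise_lt_dist {A : Set E} (hA : IsBounded A) {ε : ℝ} (hε : 0 < ε)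
    {s : Finset E} (hsA : ↑s ⊆ A) (hs : (s : Set E).Pairwise (ε < dist · ·)) :
    (s.card : ℝ) ≤ ((2 * diam A + ε) / ε) ^ finrank ℝ E := by
  obtain rfl | ⟨c, hc⟩ := s.eq_empty_or_nonempty
  · simp only [Finset.card_empty, Nat.cast_zero]
    positivity
  let _ : MeasurableSpace E := borel E
  have : BorelSpace E := ⟨rfl⟩
  set μ : Measure E := Measure.addHaar
  have hΔ : 0 ≤ diam A := diam_nonneg
  have hdisj : (s : Set E).PairwiseDisjoint (closedBall · (ε / 2)) := fun x hx y hy hxy =>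
    closedBall_disjoint_closedBall (by linarith [hs hx hy hxy])
  have hsub : ⋃ x ∈ s, closedBall x (ε / 2) ⊆ closedBall c (diam A + ε / 2) :=
    iUnion₂_subset fun x hx => closedBall_subset_closedBall'
      (by linarith [dist_le_diam_of_mem hA (hsA hx) (hsA hc)])
  have hvol : (s.card : ℝ≥0∞) * ENNReal.ofReal ((ε / 2) ^ finrank ℝ E) * μ (ball 0 1) ≤
      ENNReal.ofReal ((diam A + ε / 2) ^ finrank ℝ E) * μ (ball 0 1) := by
    calc _ = μ (⋃ x ∈ s, closedBall x (ε / 2)) := by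
          rw [measure_biUnion_finset hdisj fun x _ => measurableSet_closedBall]
          simp [Measure.addHaar_closedBall μ _ (by positivity : 0 ≤ ε / 2), mul_assoc]
      _ ≤ μ (closedBall c (diam A + ε / 2)) := measure_mono hsub
      _ = _ := Measure.addHaar_closedBall μ c (by positivity)
  rw [ENNReal.mul_le_mul_iff_left (measure_ball_pos μ 0 one_pos).ne' measure_ball_lt_top.ne,
    ← ENNReal.ofReal_natCast, ← ENNReal.ofReal_mul (by positivity),
    ENNReal.ofReal_le_ofReal_iff (by positivity), ← le_div_iff₀ (by positivity), ← div_pow]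
    at hvol
  rwa [show (diam A + ε / 2) / (ε / 2) = (2 * diam A + ε) / ε by field_simp] at hvol

theorem bddAbove_sepCards {A : Set E} (hA : IsBounded A) {ε : ℝ} (hε : 0 < ε) :
    BddAbove (sepCards A ε) := by
  refine ⟨⌊((2 * diam A + ε) / ε) ^ finrank ℝ E⌋₊, ?_⟩
  rintro _ ⟨s, hsA, hs, rfl⟩
  exact Nat.le_floor (card_le_of_pairwise_lt_dist hA hε hsA hs)

theorem card_le_packNum {A : Set E} (hA : IsBounded A) {ε : ℝ} (hε : 0 < ε) {s : Finset E}
    (hsA : ↑s ⊆ A) (hs : (s : Set E).Pairwise (ε < dist · ·)) :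
    s.card ≤ packNum A (closedBall 0 ε) := by
  rw [packNum_closedBall_eq_sSup]
  exact le_csSup (bddAbove_sepCards hA hε) ⟨s, hsA, hs, rfl⟩

theorem exists_card_eq_packNum {A : Set E} (hA : IsBounded A) {ε : ℝ} (hε : 0 < ε) :
    ∃ s : Finset E, ↑s ⊆ A ∧ (s : Set E).Pairwise (ε < dist · ·) ∧
      s.card = packNum A (closedBall 0 ε) := by
  rw [packNum_closedBall_eq_sSup]
  exact Nat.sSup_mem (s := sepCards A ε) ⟨0, ∅, by simp, by simp, rfl⟩ (bddAbove_sepCards hA hε)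

theorem packNum_le_packNum {A A' : Set E} (hA' : IsBounded A') (hAA' : A ⊆ A') {ε ε' : ℝ}
    (hε' : 0 < ε') (h : ε' ≤ ε) :
    packNum A (closedBall 0 ε) ≤ packNum A' (closedBall 0 ε') := by
  obtain ⟨s, hsA, hs, hcard⟩ := exists_card_eq_packNum (hA'.subset hAA') (hε'.trans_le h)
  rw [← hcard]
  exact card_le_packNum hA' hε' (hsA.trans hAA') (hs.mono' fun _ _ => h.trans_lt)

theorem exists_dist_le_of_card_eq_packNum {A : Set E} (hA : IsBounded A) {ε : ℝ} (hε : 0 < ε)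
    {s : Finset E} (hsA : ↑s ⊆ A) (hs : (s : Set E).Pairwise (ε < dist · ·))
    (hcard : s.card = packNum A (closedBall 0 ε)) {z : E} (hz : z ∈ A) :
    ∃ y ∈ s, dist z y ≤ ε := by
  classical
  by_contra! hfar
  have hzs : z ∉ s := fun h => (hfar z h).not_ge (by simpa using hε.le)
  have hins := card_le_packNum hA hε (s := insert z s) (by simpa using insert_subset hz hsA)
    (by simpa using hs.insert fun y hy _ => ⟨hfar y hy, dist_comm z y ▸ hfar y hy⟩)
  rw [Finset.card_insert_of_notMem hzs] at hins
  omega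

theorem packNum_le_packNum_mul {A : Set E} (hA : IsBounded A) {ε r : ℝ} (hε : 0 < ε)
    (hr : 0 < r) {B : ℝ}
    (hB : ∀ y ∈ A, (packNum (A ∩ closedBall y r) (closedBall 0 ε) : ℝ) ≤ B) :
    (packNum A (closedBall 0 ε) : ℝ) ≤ packNum A (closedBall 0 r) * B := by
  classical
  obtain ⟨s, hsA, hs, hs_card⟩ := exists_card_eq_packNum hA hε
  obtain ⟨t, htA, ht, ht_card⟩ := exists_card_eq_packNum hA hr
  have hnet : ∀ z ∈ s, ∃ y ∈ t, dist z y ≤ r := fun z hz =>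
    exists_dist_le_of_card_eq_packNum hA hr htA ht ht_card (hsA hz)
  choose! f hft hf using hnet
  have hfiber : ∀ y ∈ t, ((s.filter (f · = y)).card : ℝ) ≤ B := by
    intro y hy
    refine le_trans ?_ (hB y (htA hy))
    refine Nat.cast_le.2 (card_le_packNum (hA.subset inter_subset_left) hε ?_ (hs.mono ?_))
    · intro z hz
      obtain ⟨hzs, rfl⟩ := Finset.mem_filter.1 hz
      exact ⟨hsA hzs, hf z hzs⟩
    · exact_mod_cast Finset.filter_subset _ s
  calc (packNum A (closedBall 0 ε) : ℝ) = ∑ y ∈ t, ((s.filter (f · = y)).card : ℝ) := by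
        rw [← hs_card, Finset.card_eq_sum_card_fiberwise hft, Nat.cast_sum]
    _ ≤ ∑ _y ∈ t, B := Finset.sum_le_sum hfiber
    _ = packNum A (closedBall 0 r) * B := by simp [ht_card]

end Packing

section Entropy

variable {d : ℕ} {T : Set (EuclideanSpace ℝ (Fin d))}

lemma entGlob_nonneg (T : Set (EuclideanSpace ℝ (Fin d))) (ε : ℝ) : 0 ≤ entGlob T ε :=
  Real.log_natCast_nonneg _

lemma entLoc_nonneg (T : Set (EuclideanSpace ℝ (Fin d))) (ε : ℝ) : 0 ≤ entLoc T ε :=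
  Real.iSup_nonneg fun _ => Real.iSup_nonneg fun _ => Real.log_natCast_nonneg _

lemma entGlob_eq_zero_of_diam_le (hT : IsBounded T) {ε : ℝ} (h : diam T ≤ ε) :
    entGlob T ε = 0 := by
  rcases Nat.le_one_iff_eq_zero_or_eq_one.1 (packNum_le_one_of_diam_le hT h) with h | h <;>
    simp [entGlob, h]

lemma entGlob_antitoneOn (hT : IsBounded T) : AntitoneOn (entGlob T) (Ioi 0) :=
  fun _ ha _ _ hab => Real.log_natCast_le_log_natCast (packNum_le_packNum hT subset_rfl ha hab)

theorem entGlob_le_div (hT : IsBounded T) {ε : ℝ} (hε : 0 < ε) :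
    entGlob T ε ≤ 2 * d * diam T / ε := by
  obtain ⟨s, hsT, hs, hcard⟩ := exists_card_eq_packNum hT hε
  have hcard_le := card_le_of_pairwise_lt_dist hT hε hsT hs
  rw [finrank_euclideanSpace_fin] at hcard_le
  have hbase : 1 ≤ (2 * diam T + ε) / ε := by
    rw [le_div_iff₀ hε]
    linarith [diam_nonneg (s := T)]
  calc entGlob T ε ≤ Real.log (((2 * diam T + ε) / ε) ^ d) := by
        rw [entGlob, ← hcard]
        rcases s.card.eq_zero_or_pos with h0 | hpos
        · simpa [h0] using Real.log_nonneg (one_le_pow₀ hbase)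
        · exact Real.log_le_log (by exact_mod_cast hpos) hcard_le
    _ = d * Real.log ((2 * diam T + ε) / ε) := Real.log_pow _ _
    _ ≤ d * ((2 * diam T + ε) / ε - 1) := by
        gcongr
        exact Real.log_le_sub_one_of_pos (by positivity)
    _ = 2 * d * diam T / ε := by
        field_simp
        ring

lemma log_packNum_inter_le_entGlob (hT : IsBounded T) {ε r : ℝ} (hε : 0 < ε) (hr : ε ≤ r)
    (x : EuclideanSpace ℝ (Fin d)) :
    Real.log (packNum (T ∩ closedBall x (2 * r)) (closedBall 0 r)) ≤ entGlob T ε :=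
  Real.log_natCast_le_log_natCast (packNum_le_packNum hT inter_subset_left hε hr)

lemma entLoc_le_entGlob (hT : IsBounded T) {ε : ℝ} (hε : 0 < ε) : entLoc T ε ≤ entGlob T ε :=
  Real.iSup_le (fun r => Real.iSup_le (fun x => log_packNum_inter_le_entGlob hT hε r.2 x)
    (entGlob_nonneg T ε)) (entGlob_nonneg T ε)

lemma log_packNum_le_entLoc (hT : IsBounded T) {ε r : ℝ} (hε : 0 < ε) (hr : ε ≤ r)
    {x : EuclideanSpace ℝ (Fin d)} (hx : x ∈ T) :
    Real.log (packNum (T ∩ closedBall x (2 * r)) (closedBall 0 r)) ≤ entLoc T ε := by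
  have hinner : ∀ r' : {r' : ℝ // ε ≤ r'}, BddAbove (range fun y : T =>
      Real.log (packNum (T ∩ closedBall (y : EuclideanSpace ℝ (Fin d)) (2 * r'.1))
        (closedBall 0 r'.1))) := fun r' =>
    ⟨entGlob T ε, forall_mem_range.2 fun y => log_packNum_inter_le_entGlob hT hε r'.2 y⟩
  have houter : BddAbove (range fun r' : {r' : ℝ // ε ≤ r'} => ⨆ y : T,
      Real.log (packNum (T ∩ closedBall (y : EuclideanSpace ℝ (Fin d)) (2 * r'.1))
        (closedBall 0 r'.1))) :=
    ⟨entGlob T ε, forall_mem_range.2 fun r' => Real.iSup_le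
      (fun y => log_packNum_inter_le_entGlob hT hε r'.2 y) (entGlob_nonneg T ε)⟩
  exact (le_ciSup (hinner ⟨r, hr⟩) ⟨x, hx⟩).trans (le_ciSup houter ⟨r, hr⟩)

lemma entLoc_antitoneOn (hT : IsBounded T) : AntitoneOn (entLoc T) (Ioi 0) :=
  fun _ ha _ _ hab => Real.iSup_le (fun r => Real.iSup_le
    (fun x => log_packNum_le_entLoc hT ha (hab.trans r.2) x.2) (entLoc_nonneg T _))
    (entLoc_nonneg T _)

theorem entGlob_le_entGlob_two_mul_add_entLoc (hT : IsBounded T) {ε : ℝ} (hε : 0 < ε) :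
    entGlob T ε ≤ entGlob T (2 * ε) + entLoc T ε := by
  have hcount := packNum_le_packNum_mul hT hε (by positivity : 0 < 2 * ε)
    (B := Real.exp (entLoc T ε)) fun y hy =>
      (Real.le_exp_log _).trans (Real.exp_le_exp.2 (log_packNum_le_entLoc hT hε le_rfl hy))
  obtain hM | hM := (Nat.zero_le (packNum T (closedBall 0 ε))).eq_or_lt
  · rw [entGlob, ← hM, Nat.cast_zero, Real.log_zero]
    exact add_nonneg (entGlob_nonneg T _) (entLoc_nonneg T _)
  have hN : (packNum T (closedBall 0 (2 * ε)) : ℝ) ≠ 0 := fun h => by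
    rw [h, zero_mul] at hcount
    exact hcount.not_gt (by exact_mod_cast hM)
  calc entGlob T ε ≤ Real.log (packNum T (closedBall 0 (2 * ε)) * Real.exp (entLoc T ε)) :=
        Real.log_le_log (by exact_mod_cast hM) hcount
    _ = entGlob T (2 * ε) + entLoc T ε := by
        rw [Real.log_mul hN (Real.exp_pos _).ne', Real.log_exp, entGlob]

theorem sqrt_entGlob_le (hT : IsBounded T) {ε : ℝ} (hε : 0 < ε) :
    √(entGlob T ε) ≤ √(entGlob T (2 * ε)) + √(entLoc T ε) :=
  (Real.sqrt_le_sqrt (entGlob_le_entGlob_two_mul_add_entLoc hT hε)).trans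
    (Real.sqrt_add_le_add_sqrt (entGlob_nonneg T _) (entLoc_nonneg T _))

end Entropy

section Integrals

theorem intervalIntegrable_sqrt_of_le_div {f : ℝ → ℝ} {C b : ℝ} (hf : AntitoneOn f (Ioi 0))
    (hfC : ∀ ε > 0, f ε ≤ C / ε) (hb : 0 ≤ b) :
    IntervalIntegrable (fun ε => √(f ε)) volume 0 b := by
  rw [intervalIntegrable_iff_integrableOn_Ioc_of_le hb]
  refine Integrable.mono' (g := fun ε => √C * ε ^ (-(1 / 2) : ℝ)) ?_ ?_ ?_
  · exact (intervalIntegrable_iff_integrableOn_Ioc_of_le hb).1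
      ((intervalIntegral.intervalIntegrable_rpow' (by norm_num)).const_mul _)
  · refine (aemeasurable_restrict_of_antitoneOn measurableSet_Ioc ?_).aestronglyMeasurable
    exact fun x hx y hy hxy =>
      Real.sqrt_le_sqrt (hf (Ioc_subset_Ioi_self hx) (Ioc_subset_Ioi_self hy) hxy)
  · filter_upwards [ae_restrict_mem measurableSet_Ioc] with ε hε
    rw [Real.norm_of_nonneg (Real.sqrt_nonneg _)]
    calc √(f ε) ≤ √(C / ε) := Real.sqrt_le_sqrt (hfC ε hε.1)
      _ = √C * ε ^ (-(1 / 2) : ℝ) := by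
        rw [Real.sqrt_div' C hε.1.le, Real.sqrt_eq_rpow ε, Real.rpow_neg hε.1.le, div_eq_mul_inv]

theorem integral_le_two_mul_integral_of_le_comp_two_mul {F G : ℝ → ℝ} {δ Δ : ℝ} (hδ : 0 ≤ δ)
    (hδΔ : δ ≤ Δ) (hF : IntervalIntegrable F volume δ (2 * Δ))
    (hG : IntervalIntegrable G volume δ Δ) (hF_nonneg : ∀ ε, 0 ≤ F ε)
    (hF_zero : ∀ ε, Δ ≤ ε → F ε = 0) (hFG : ∀ ε ∈ Ioo δ Δ, F ε ≤ F (2 * ε) + G ε) :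
    ∫ ε in δ..Δ, F ε ≤ 2 * ∫ ε in δ..Δ, G ε := by
  have hF' : ∀ a b, a ∈ uIcc δ (2 * Δ) → b ∈ uIcc δ (2 * Δ) → IntervalIntegrable F volume a b :=
    fun a b ha hb => hF.mono_set (uIcc_subset_uIcc ha hb)
  have hmem : ∀ x, δ ≤ x → x ≤ 2 * Δ → x ∈ uIcc δ (2 * Δ) := fun x h₁ h₂ =>
    Icc_subset_uIcc ⟨h₁, h₂⟩
  have hF₁ := hF' δ Δ (hmem δ le_rfl (by linarith)) (hmem Δ hδΔ (by linarith))
  have hF₂ : IntervalIntegrable (fun ε => F (2 * ε)) volume δ Δ := by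
    simpa using (hF' (2 * δ) (2 * Δ) (hmem _ (by linarith) (by linarith))
      (hmem _ (by linarith) le_rfl)).comp_mul_left (c := 2)
  have htail : ∫ ε in Δ..2 * Δ, F ε = 0 := by
    rw [intervalIntegral.integral_congr (g := fun _ => 0), intervalIntegral.integral_zero]
    intro ε hε
    exact hF_zero ε (uIcc_of_le (by linarith : Δ ≤ 2 * Δ) ▸ hε).1
  have hdil : ∫ ε in δ..Δ, F (2 * ε) = 2⁻¹ * ∫ ε in (2 * δ)..Δ, F ε := by
    rw [intervalIntegral.integral_comp_mul_left F two_ne_zero, smul_eq_mul,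
      ← intervalIntegral.integral_add_adjacent_intervals
        (hF' (2 * δ) Δ (hmem _ (by linarith) (by linarith)) (hmem Δ hδΔ (by linarith)))
        (hF' Δ (2 * Δ) (hmem Δ hδΔ (by linarith)) (hmem _ (by linarith) le_rfl)),
      htail, add_zero]
  have hshift : ∫ ε in (2 * δ)..Δ, F ε ≤ ∫ ε in δ..Δ, F ε := by
    rw [← intervalIntegral.integral_add_adjacent_intervals
      (hF' δ (2 * δ) (hmem δ le_rfl (by linarith)) (hmem _ (by linarith) (by linarith)))
      (hF' (2 * δ) Δ (hmem _ (by linarith) (by linarith)) (hmem Δ hδΔ (by linarith)))]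
    linarith [intervalIntegral.integral_nonneg (μ := volume) (by linarith : δ ≤ 2 * δ)
      fun ε _ => hF_nonneg ε]
  have hmono := intervalIntegral.integral_mono_on_of_le_Ioo hδΔ hF₁ (hF₂.add hG) hFG
  rw [intervalIntegral.integral_add hF₂ hG, hdil] at hmono
  linarith

variable {d : ℕ} {T : Set (EuclideanSpace ℝ (Fin d))}

theorem intervalIntegrable_sqrt_entGlob (hT : IsBounded T) {a b : ℝ} (ha : 0 ≤ a) (hb : 0 ≤ b) :
    IntervalIntegrable (fun ε => √(entGlob T ε)) volume a b :=
  have h := fun c => intervalIntegrable_sqrt_of_le_div (entGlob_antitoneOn hT)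
    (fun _ hε => entGlob_le_div hT hε) (b := c)
  (h a ha).symm.trans (h b hb)

theorem intervalIntegrable_sqrt_entLoc (hT : IsBounded T) {a b : ℝ} (ha : 0 ≤ a) (hb : 0 ≤ b) :
    IntervalIntegrable (fun ε => √(entLoc T ε)) volume a b :=
  have h := fun c => intervalIntegrable_sqrt_of_le_div (entLoc_antitoneOn hT)
    (fun _ hε => (entLoc_le_entGlob hT hε).trans (entGlob_le_div hT hε)) (b := c)
  (h a ha).symm.trans (h b hb)

end Integrals

/-- For bounded `T ⊆ ℝ^d` with `Δ = diam T`, and Dudley integrals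
`𝒥_δ(T) = ∫_δ^Δ √(h_T(ε)) dε`, `𝒥_δ^loc(T) = ∫_δ^Δ √(h_T^loc(ε)) dε`, for every
`δ ∈ [0, Δ]` one has `𝒥_δ^loc(T) ≤ 𝒥_δ(T) ≤ 4𝒥_{δ/4}^loc(T)`. -/
theorem statement10 {d : ℕ} (T : Set (EuclideanSpace ℝ (Fin d)))
    (hbd : Bornology.IsBounded T) (δ : ℝ) (hδ : δ ∈ Set.Icc 0 (diam T)) :
    (∫ ε in δ..diam T, Real.sqrt (entLoc T ε)) ≤
      (∫ ε in δ..diam T, Real.sqrt (entGlob T ε)) ∧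
    (∫ ε in δ..diam T, Real.sqrt (entGlob T ε)) ≤
      4 * ∫ ε in (δ / 4)..(diam T), Real.sqrt (entLoc T ε) := by
  obtain ⟨hδ, hδΔ⟩ := hδ
  have hΔ : 0 ≤ diam T := hδ.trans hδΔ
  refine ⟨intervalIntegral.integral_mono_on_of_le_Ioo hδΔ
    (intervalIntegrable_sqrt_entLoc hbd hδ hΔ) (intervalIntegrable_sqrt_entGlob hbd hδ hΔ)
    fun ε hε => Real.sqrt_le_sqrt (entLoc_le_entGlob hbd (hδ.trans_lt hε.1)), ?_⟩
  have hloc_nonneg : 0 ≤ ∫ ε in (δ / 4)..diam T, √(entLoc T ε) :=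
    intervalIntegral.integral_nonneg (by linarith) fun _ _ => Real.sqrt_nonneg _
  calc ∫ ε in δ..diam T, √(entGlob T ε) ≤ 2 * ∫ ε in δ..diam T, √(entLoc T ε) :=
        integral_le_two_mul_integral_of_le_comp_two_mul hδ hδΔ
          (intervalIntegrable_sqrt_entGlob hbd hδ (by linarith))
          (intervalIntegrable_sqrt_entLoc hbd hδ hΔ) (fun _ => Real.sqrt_nonneg _)
          (fun ε hε => by rw [entGlob_eq_zero_of_diam_le hbd hε, Real.sqrt_zero])
          fun ε hε => sqrt_entGlob_le hbd (hδ.trans_lt hε.1)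
    _ ≤ 2 * ∫ ε in (δ / 4)..diam T, √(entLoc T ε) := by
        gcongr
        exact intervalIntegral.integral_mono_interval (by linarith) hδΔ le_rfl
          (ae_of_all _ fun _ => Real.sqrt_nonneg _)
          (intervalIntegrable_sqrt_entLoc hbd (by linarith) hΔ)
    _ ≤ 4 * ∫ ε in (δ / 4)..diam T, √(entLoc T ε) := by linarith
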